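/- The function μ : ℝ → ℝ defined by μ(τ) = 1/(1−e^{−τ}) − 1/τ for τ ≠ 0 and μ(0) = 1/2 is smooth, has everywhere positive derivative, and is a diffeomorphism from ℝ onto the open interval (0,1). -/

import Mathlib

open Set

noncomputable section

/-- `μ(τ) = (Todd(τ) − 1)/τ = 1/(1 − e^{−τ}) − 1/τ` for `τ ≠ 0`, `μ(0) = 1/2`. -/
def toddMu (t : ℝ) : ℝ :=
  if t = 0 then 1 / 2 else 1 / (1 - Real.exp (-t)) - 1 / t

namespace ToddAux
open Complex Filter Topology

def gC : ℂ → ℂ := fun z => 1 - Complex.exp (-z)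
def hC : ℂ → ℂ := fun z => z - 1 + Complex.exp (-z)
def jC : ℂ → ℂ := dslope gC 0
def qC : ℂ → ℂ := dslope hC 0
def kC : ℂ → ℂ := dslope qC 0
def FC : ℂ → ℂ := fun z => kC z / jC z

lemma expNeg_analytic : ∀ z, AnalyticAt ℂ (fun w : ℂ => Complex.exp (-w)) z :=
  fun _ => analyticAt_cexp.comp (analyticAt_id.neg)
lemma gC_analytic : ∀ z, AnalyticAt ℂ gC z :=
  fun z => analyticAt_const.sub (expNeg_analytic z)
lemma hC_analytic : ∀ z, AnalyticAt ℂ hC z :=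
  fun z => (analyticAt_id.sub analyticAt_const).add (expNeg_analytic z)
lemma analyticAt_dslope_zero {f : ℂ → ℂ} (hf : ∀ z, AnalyticAt ℂ f z) (z : ℂ) :
    AnalyticAt ℂ (dslope f 0) z := by
  rcases eq_or_ne z 0 with rfl | hz
  · obtain ⟨p, hp⟩ := hf 0
    exact hp.has_fpower_series_dslope_fslope.analyticAt
  · have h1 : AnalyticAt ℂ (fun w => (f w - f 0) / (w - 0)) z :=
      ((hf z).sub analyticAt_const).div (analyticAt_id.sub analyticAt_const)
        (by simpa using hz)
    apply h1.congr
    filter_upwards [isOpen_ne.mem_nhds hz] with w hw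
    rw [dslope_of_ne _ hw, slope_def_field]
lemma qC_analytic : ∀ z, AnalyticAt ℂ qC z := analyticAt_dslope_zero hC_analytic
lemma jC_analytic : ∀ z, AnalyticAt ℂ jC z := analyticAt_dslope_zero gC_analytic
lemma kC_analytic : ∀ z, AnalyticAt ℂ kC z := analyticAt_dslope_zero qC_analytic
lemma hasDerivAt_expNeg (z : ℂ) :
    HasDerivAt (fun w : ℂ => Complex.exp (-w)) (-Complex.exp (-z)) z := by
  simpa [Function.comp_def] using (Complex.hasDerivAt_exp (-z)).comp z (hasDerivAt_neg z)
lemma jC_zero : jC 0 = 1 := by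
  have : HasDerivAt gC 1 0 := by
    show HasDerivAt (fun z : ℂ => 1 - Complex.exp (-z)) 1 0
    simpa [Pi.sub_def, gC] using (hasDerivAt_const (0:ℂ) 1).sub (hasDerivAt_expNeg 0)
  rw [jC, dslope_same, this.deriv]
lemma qC_zero : qC 0 = 0 := by
  have : HasDerivAt hC 0 0 := by
    have := ((hasDerivAt_id (0:ℂ)).sub (hasDerivAt_const 0 1)).add (hasDerivAt_expNeg 0)
    show HasDerivAt (fun z : ℂ => z - 1 + Complex.exp (-z)) 0 0
    simpa [Pi.sub_def, Pi.add_def, hC] using this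
  rw [qC, dslope_same, this.deriv]
lemma jC_ne (z : ℂ) (hz : z ≠ 0) : jC z = gC z / z := by
  rw [jC, dslope_of_ne _ hz, slope_def_field]
  simp [gC]
lemma qC_ne (z : ℂ) (hz : z ≠ 0) : qC z = hC z / z := by
  rw [qC, dslope_of_ne _ hz, slope_def_field]
  simp [hC]
lemma kC_ne (z : ℂ) (hz : z ≠ 0) : kC z = hC z / z ^ 2 := by
  rw [kC, dslope_of_ne _ hz, slope_def_field, qC_zero, qC_ne z hz]
  rw [sub_zero, sub_zero, div_div, sq]

lemma expNeg_real (t : ℝ) : Complex.exp (-(t:ℂ)) = (Real.exp (-t) : ℝ) := by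
  norm_cast
lemma gC_real_ne (t : ℝ) (ht : t ≠ 0) : gC (t:ℂ) ≠ 0 := by
  rw [gC]
  simp only [expNeg_real]
  rw [sub_ne_zero]
  intro h
  have h2 : Real.exp (-t) = 1 := by exact_mod_cast h.symm
  have := Real.exp_injective (by rw [h2, Real.exp_zero] : Real.exp (-t) = Real.exp 0)
  exact ht (by simpa [neg_eq_zero] using this)
lemma jC_real_ne (t : ℝ) : jC (t:ℂ) ≠ 0 := by
  rcases eq_or_ne t 0 with rfl | ht
  · simp [jC_zero]
  · have ht' : (t:ℂ) ≠ 0 := by exact_mod_cast ht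
    rw [jC_ne _ ht']
    exact div_ne_zero (gC_real_ne t ht) ht'

lemma kC_zero_re : (kC 0).re = 1/2 := by
  have hcont : ContinuousAt kC 0 := (kC_analytic 0).continuousAt
  have h1 : Tendsto (fun t : ℝ => kC ↑t) (𝓝[>] (0:ℝ)) (𝓝 (kC 0)) := by
    have : Tendsto (fun t : ℝ => (t:ℂ)) (𝓝[>] (0:ℝ)) (𝓝 (0:ℂ)) := by
      simpa using (Complex.continuous_ofReal.tendsto 0).mono_left nhdsWithin_le_nhds
    exact hcont.tendsto.comp this
  set r : ℝ → ℝ := fun t => (t - 1 + Real.exp (-t)) / t ^ 2 with hr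
  have h2 : Tendsto (fun t : ℝ => (r t : ℂ)) (𝓝[>] (0:ℝ)) (𝓝 (kC 0)) := by
    apply h1.congr'
    filter_upwards [self_mem_nhdsWithin] with t ht
    have ht' : (t:ℂ) ≠ 0 := by exact_mod_cast ne_of_gt ht
    rw [kC_ne _ ht', hC, hr]
    push_cast
    ring
  have h3 : Tendsto r (𝓝[>] (0:ℝ)) (𝓝 ((kC 0).re)) := by
    have := (Complex.continuous_re.tendsto (kC 0)).comp h2
    simpa [Function.comp_def] using this
  have h4 : Tendsto r (𝓝[>] (0:ℝ)) (𝓝 (1/2)) := by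
    apply tendsto_of_tendsto_of_tendsto_of_le_of_le'
      (g := fun t : ℝ => 1/2 - (2/9) * t) (h := fun t : ℝ => 1/2 + (2/9) * t)
    · have : Tendsto (fun t : ℝ => 1/2 - (2/9) * t) (𝓝 (0:ℝ)) (𝓝 (1/2 - (2/9)*0)) :=
        (tendsto_const_nhds.sub (tendsto_const_nhds.mul tendsto_id))
      simpa using this.mono_left nhdsWithin_le_nhds
    · have : Tendsto (fun t : ℝ => 1/2 + (2/9) * t) (𝓝 (0:ℝ)) (𝓝 (1/2 + (2/9)*0)) :=
        (tendsto_const_nhds.add (tendsto_const_nhds.mul tendsto_id))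
      simpa using this.mono_left nhdsWithin_le_nhds
    · filter_upwards [Ioo_mem_nhdsGT_of_mem (by norm_num : (0:ℝ) ∈ Ico 0 1)] with t ht
      obtain ⟨ht0, ht1⟩ := ht
      have hb := Real.exp_bound (x := -t) (by rw [abs_neg, abs_of_pos ht0]; linarith)
        (n := 3) (by norm_num)
      have hsum : ∑ m ∈ Finset.range 3, (-t) ^ m / (m.factorial : ℝ) = 1 - t + t^2/2 := by
        simp [Finset.sum_range_succ]
        ring
      rw [hsum, abs_neg, abs_of_pos ht0] at hb
      have hb' : |Real.exp (-t) - (1 - t + t^2/2)| ≤ 2/9 * t^3 := by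
        refine hb.trans (le_of_eq ?_)
        rw [mul_comm]
        norm_num [Nat.factorial]
      rw [abs_le] at hb'
      rw [hr]
      rw [le_div_iff₀ (by positivity)]
      nlinarith [hb'.1, hb'.2]
    · filter_upwards [Ioo_mem_nhdsGT_of_mem (by norm_num : (0:ℝ) ∈ Ico 0 1)] with t ht
      obtain ⟨ht0, ht1⟩ := ht
      have hb := Real.exp_bound (x := -t) (by rw [abs_neg, abs_of_pos ht0]; linarith)
        (n := 3) (by norm_num)
      have hsum : ∑ m ∈ Finset.range 3, (-t) ^ m / (m.factorial : ℝ) = 1 - t + t^2/2 := by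
        simp [Finset.sum_range_succ]
        ring
      rw [hsum, abs_neg, abs_of_pos ht0] at hb
      have hb' : |Real.exp (-t) - (1 - t + t^2/2)| ≤ 2/9 * t^3 := by
        refine hb.trans (le_of_eq ?_)
        rw [mul_comm]
        norm_num [Nat.factorial]
      rw [abs_le] at hb'
      rw [hr]
      rw [div_le_iff₀ (by positivity)]
      nlinarith [hb'.1, hb'.2]
  exact tendsto_nhds_unique h3 h4

lemma toddMu_eq : toddMu = fun t : ℝ => (FC ↑t).re := by
  funext t
  rcases eq_or_ne t 0 with rfl | ht
  · have h0 : ((0:ℝ):ℂ) = 0 := by norm_num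
    rw [toddMu, if_pos rfl]
    show (1:ℝ)/2 = _
    rw [h0, FC, jC_zero, div_one, kC_zero_re]
  · have ht' : (t:ℂ) ≠ 0 := by exact_mod_cast ht
    have hg := gC_real_ne t ht
    have hE : (1:ℂ) - (Real.exp (-t) : ℝ) ≠ 0 := by
      rw [← expNeg_real]; exact hg
    have : FC ↑t = ((1 / (1 - Real.exp (-t)) - 1 / t : ℝ) : ℂ) := by
      simp only [gC] at hg
      rw [FC, kC_ne _ ht', jC_ne _ ht', hC, gC]
      push_cast
      field_simp
      ring
    rw [toddMu, if_neg ht, this, Complex.ofReal_re]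
lemma toddMu_contDiff : ContDiff ℝ (⊤ : ℕ∞) toddMu := by
  rw [toddMu_eq, contDiff_iff_contDiffAt]
  intro t
  have h1 : ContDiffAt ℝ (⊤ : ℕ∞) FC (↑t : ℂ) :=
    (((kC_analytic _).div (jC_analytic _) (jC_real_ne t)).contDiffAt).restrict_scalars ℝ
  exact (Complex.reCLM.contDiff.contDiffAt).comp _
    (h1.comp t (Complex.ofRealCLM.contDiff.contDiffAt))

lemma one_sub_exp_ne {t : ℝ} (ht : t ≠ 0) : 1 - Real.exp (-t) ≠ 0 := by
  rw [sub_ne_zero]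
  intro h
  have := Real.exp_injective (by rw [← h, Real.exp_zero] : Real.exp 0 = Real.exp (-t))
  exact ht (by simpa [neg_eq_zero] using this.symm)

lemma toddMu_hasDerivAt {t : ℝ} (ht : t ≠ 0) :
    HasDerivAt toddMu (1/t^2 - Real.exp (-t)/(1 - Real.exp (-t))^2) t := by
  have hne := one_sub_exp_ne ht
  have h1 : HasDerivAt (fun s : ℝ => 1 - Real.exp (-s)) (Real.exp (-t)) t := by
    have : HasDerivAt (fun s : ℝ => Real.exp (-s)) (-Real.exp (-t)) t := by
      simpa [Function.comp_def] using (Real.hasDerivAt_exp (-t)).comp t (hasDerivAt_neg t)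
    simpa [Pi.sub_def] using (hasDerivAt_const t (1:ℝ)).sub this
  have h2 : HasDerivAt (fun s : ℝ => (1 - Real.exp (-s))⁻¹)
      (-Real.exp (-t) / (1 - Real.exp (-t))^2) t := by
    simpa [div_eq_mul_inv, Pi.inv_def] using h1.inv hne
  have h3 : HasDerivAt (fun s : ℝ => (1 - Real.exp (-s))⁻¹ - s⁻¹)
      (-Real.exp (-t) / (1 - Real.exp (-t))^2 - (-(t^2)⁻¹)) t := h2.sub (hasDerivAt_inv ht)
  have h4 : HasDerivAt toddMu
      (-Real.exp (-t) / (1 - Real.exp (-t))^2 - (-(t^2)⁻¹)) t := by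
    apply h3.congr_of_eventuallyEq
    filter_upwards [isOpen_ne.mem_nhds ht] with s hs
    rw [toddMu, if_neg hs, one_div, one_div]
  convert h4 using 1
  field_simp
  ring

lemma toddMu_deriv_pos_ne {t : ℝ} (ht : t ≠ 0) : 0 < deriv toddMu t := by
  rw [(toddMu_hasDerivAt ht).deriv]
  have hE := Real.exp_pos (-t)
  have hne := one_sub_exp_ne ht
  have key : t^2 * Real.exp (-t) < (1 - Real.exp (-t))^2 := by
    have hsq : (t/2)^2 < Real.sinh (t/2)^2 := by
      rcases ht.lt_or_gt with h | h
      · have h2 : (0:ℝ) < -t/2 := by linarith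
        have := Real.self_lt_sinh_iff.mpr h2
        rw [show -t/2 = -(t/2) by ring, Real.sinh_neg] at this
        nlinarith
      · have h2 : (0:ℝ) < t/2 := by linarith
        nlinarith [Real.self_lt_sinh_iff.mpr h2]
    have h1 : Real.exp (-(t/2)) * Real.exp (t/2) = 1 := by
      rw [← Real.exp_add]; norm_num
    have h2 : Real.exp (-(t/2)) * Real.exp (-(t/2)) = Real.exp (-t) := by
      rw [← Real.exp_add]; ring_nf
    have hsinh : 1 - Real.exp (-t) = 2 * Real.exp (-(t/2)) * Real.sinh (t/2) := by
      rw [Real.sinh_eq]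
      linear_combination h2 - h1
    have hE2 := Real.exp_pos (-(t/2))
    nlinarith [sq_nonneg (Real.sinh (t/2)), sq_nonneg t]
  have ht2 : (0:ℝ) < t^2 := by positivity
  have : Real.exp (-t) / (1 - Real.exp (-t))^2 < 1 / t^2 := by
    rw [div_lt_div_iff₀ (by positivity) ht2]
    nlinarith
  linarith

lemma toddMu_zero : toddMu 0 = 1/2 := by simp [toddMu]

lemma toddMu_differentiable : Differentiable ℝ toddMu :=
  toddMu_contDiff.differentiable (by simp)

lemma deriv_toddMu_differentiable : Differentiable ℝ (deriv toddMu) := by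
  have h : ContDiff ℝ ((⊤ : ℕ∞) : WithTop ℕ∞) toddMu := toddMu_contDiff.of_le (by simp)
  exact (contDiff_infty_iff_deriv.mp h).2.differentiable (by simp)

lemma deriv_toddMu_zero : deriv toddMu 0 = 1/12 := by
  set d := deriv toddMu 0 with hd
  have hmu : HasDerivAt toddMu d 0 := (toddMu_differentiable 0).hasDerivAt
  have hD : HasDerivAt (deriv toddMu) (deriv (deriv toddMu) 0) 0 :=
    (deriv_toddMu_differentiable 0).hasDerivAt
  have hpsi : HasDerivAt (fun t => t * deriv toddMu t) d 0 := by
    have := (hasDerivAt_id (0:ℝ)).mul hD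
    simpa [Pi.mul_def] using this
  have hphi : HasDerivAt (fun t => t * (toddMu t - toddMu t ^ 2) + 1 - 2 * toddMu t)
      (1/4 - 2 * d) 0 := by
    have h1 : HasDerivAt (fun t => toddMu t - toddMu t ^ 2)
        (d - 2 * toddMu 0 ^ 1 * d) 0 := hmu.sub (hmu.pow 2)
    have h2 := (hasDerivAt_id (0:ℝ)).mul h1
    have h3 := (h2.add_const 1).sub (hmu.const_mul 2)
    refine h3.congr_deriv ?_
    simp [toddMu_zero]
    ring
  have heq : (fun t => t * deriv toddMu t)
      = fun t => t * (toddMu t - toddMu t ^ 2) + 1 - 2 * toddMu t := by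
    funext t
    rcases eq_or_ne t 0 with rfl | ht
    · simp [toddMu_zero]
    · rw [(toddMu_hasDerivAt ht).deriv, toddMu, if_neg ht]
      have hne := one_sub_exp_ne ht
      field_simp [ht, hne]
      ring
  rw [heq] at hpsi
  have h4 := hpsi.unique hphi
  linarith

lemma toddMu_deriv_pos : ∀ t, 0 < deriv toddMu t := by
  intro t
  rcases eq_or_ne t 0 with rfl | ht
  · rw [deriv_toddMu_zero]; norm_num
  · exact toddMu_deriv_pos_ne ht

lemma toddMu_strictMono : StrictMono toddMu := strictMono_of_deriv_pos toddMu_deriv_pos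

lemma toddMu_neg (t : ℝ) : toddMu (-t) = 1 - toddMu t := by
  rcases eq_or_ne t 0 with rfl | ht
  · norm_num [toddMu]
  · have h1 := one_sub_exp_ne ht
    have h2 : 1 - Real.exp t ≠ 0 := by
      have := one_sub_exp_ne (neg_ne_zero.mpr ht)
      rwa [neg_neg] at this
    have hprod : Real.exp t * Real.exp (-t) = 1 := by
      rw [← Real.exp_add]; norm_num
    rw [toddMu, toddMu, if_neg (neg_ne_zero.mpr ht), if_neg ht, neg_neg]
    have L : 1/(1 - Real.exp t) = -Real.exp (-t)/(1 - Real.exp (-t)) := by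
      rw [div_eq_div_iff h2 h1]
      linear_combination -hprod
    rw [L]
    field_simp [ht, h1]
    ring

lemma toddMu_lt_one_of_pos {t : ℝ} (ht : 0 < t) : toddMu t < 1 := by
  have h := Real.add_one_lt_exp (ne_of_gt ht)
  have hE0 := Real.exp_pos (-t)
  have hE1 : Real.exp (-t) < 1 := Real.exp_lt_one_iff.mpr (by linarith)
  have hprod : Real.exp t * Real.exp (-t) = 1 := by
    rw [← Real.exp_add]; norm_num
  have key : t * Real.exp (-t) < 1 - Real.exp (-t) := by
    nlinarith [mul_lt_mul_of_pos_right h hE0]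
  rw [toddMu, if_neg ht.ne']
  rw [div_sub_div _ _ (by linarith : 1 - Real.exp (-t) ≠ 0) ht.ne',
    div_lt_one (by nlinarith)]
  nlinarith

lemma toddMu_mem (t : ℝ) : toddMu t ∈ Ioo (0:ℝ) 1 := by
  rcases lt_trichotomy t 0 with h | rfl | h
  · constructor
    · have hneg := toddMu_neg (-t)
      rw [neg_neg] at hneg
      have := toddMu_lt_one_of_pos (by linarith : (0:ℝ) < -t)
      linarith
    · have := toddMu_strictMono h
      rw [toddMu_zero] at this
      linarith
  · rw [toddMu_zero]; norm_num
  · constructor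
    · have := toddMu_strictMono h
      rw [toddMu_zero] at this
      linarith
    · exact toddMu_lt_one_of_pos h

lemma toddMu_tendsto_atTop : Tendsto toddMu atTop (𝓝 1) := by
  have he : Tendsto (fun t : ℝ => Real.exp (-t)) atTop (𝓝 0) :=
    Real.tendsto_exp_atBot.comp tendsto_neg_atTop_atBot
  have ha : Tendsto (fun t : ℝ => 1/(1 - Real.exp (-t)) - 1/t) atTop (𝓝 1) := by
    have h1 : Tendsto (fun t : ℝ => (1 - Real.exp (-t))⁻¹) atTop (𝓝 ((1 - 0)⁻¹ : ℝ)) :=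
      (tendsto_const_nhds.sub he).inv₀ (by norm_num)
    have h2 : Tendsto (fun t : ℝ => t⁻¹) atTop (𝓝 (0:ℝ)) := tendsto_inv_atTop_zero
    have h3 := h1.sub h2
    norm_num at h3
    simpa [one_div] using h3
  apply ha.congr'
  filter_upwards [eventually_gt_atTop (0:ℝ)] with t ht
  rw [toddMu, if_neg ht.ne']

lemma toddMu_tendsto_atBot : Tendsto toddMu atBot (𝓝 0) := by
  have he : Tendsto (fun t : ℝ => Real.exp (-t) - 1) atBot atTop := by
    apply tendsto_atTop_add_const_right
    exact Real.tendsto_exp_atTop.comp tendsto_neg_atBot_atTop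
  have ha : Tendsto (fun t : ℝ => 1/(1 - Real.exp (-t)) - 1/t) atBot (𝓝 0) := by
    have h1 : Tendsto (fun t : ℝ => (Real.exp (-t) - 1)⁻¹) atBot (𝓝 (0:ℝ)) := by
      have := he.inv_tendsto_atTop
      simpa [Pi.inv_apply, Pi.inv_def] using this
    have h2 : Tendsto (fun t : ℝ => t⁻¹) atBot (𝓝 (0:ℝ)) := by
      have h := (tendsto_neg_atBot_atTop (G := ℝ)).inv_tendsto_atTop.neg
      simpa [Pi.inv_apply, inv_neg] using h
    have h3 := h1.neg.sub h2
    norm_num at h3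
    apply h3.congr
    intro t
    rw [one_div, one_div, ← inv_neg]
    congr 2
    ring
  apply ha.congr'
  filter_upwards [eventually_lt_atBot (0:ℝ)] with t ht
  rw [toddMu, if_neg ht.ne]

lemma toddMu_range : range toddMu = Ioo 0 1 := by
  apply Subset.antisymm
  · rintro y ⟨t, rfl⟩
    exact toddMu_mem t
  · intro y hy
    obtain ⟨a, ha⟩ : ∃ a, toddMu a < y :=
      (toddMu_tendsto_atBot.eventually (eventually_lt_nhds hy.1)).exists
    obtain ⟨b, hb⟩ : ∃ b, y < toddMu b :=
      (toddMu_tendsto_atTop.eventually (eventually_gt_nhds hy.2)).exists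
    have hab : a < b := toddMu_strictMono.lt_iff_lt.mp (lt_trans ha hb)
    obtain ⟨t, _, ht⟩ := intermediate_value_Ioo hab.le
      (toddMu_contDiff.continuous.continuousOn) ⟨ha, hb⟩
    exact ⟨t, ht⟩

open Classical in
def toddInv : ℝ → ℝ := fun x => if h : ∃ t, toddMu t = x then h.choose else 0

lemma toddInv_left (t : ℝ) : toddInv (toddMu t) = t := by
  have h : ∃ s, toddMu s = toddMu t := ⟨t, rfl⟩
  rw [toddInv, dif_pos h]
  exact toddMu_strictMono.injective h.choose_spec

lemma toddInv_right {x : ℝ} (hx : x ∈ Ioo (0:ℝ) 1) : toddMu (toddInv x) = x := by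
  have h : ∃ t, toddMu t = x := by
    have : x ∈ range toddMu := by rw [toddMu_range]; exact hx
    exact this
  rw [toddInv, dif_pos h]
  exact h.choose_spec

lemma toddInv_contDiffOn : ContDiffOn ℝ (⊤ : ℕ∞) toddInv (Ioo 0 1) := by
  intro x hx
  have hx' := hx
  obtain ⟨t, rfl⟩ : x ∈ range toddMu := by rw [toddMu_range]; exact hx
  have hf : ContDiffAt ℝ (⊤ : ℕ∞) toddMu t := toddMu_contDiff.contDiffAt
  have hdAt : HasDerivAt toddMu (deriv toddMu t) t := (toddMu_differentiable t).hasDerivAt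
  have hfd := hdAt.hasFDerivAt_equiv (ne_of_gt (toddMu_deriv_pos t))
  have hl := hf.to_localInverse hfd (by simp)
  have hev : ∀ᶠ y in 𝓝 (toddMu t), toddMu ((hf.localInverse hfd (by simp)) y) = y :=
    (hf.hasStrictFDerivAt' hfd (by simp)).eventually_right_inverse
  have heq : toddInv =ᶠ[𝓝 (toddMu t)] hf.localInverse hfd (by simp) := by
    filter_upwards [hev, isOpen_Ioo.mem_nhds hx'] with y h1 h2
    apply toddMu_strictMono.injective
    rw [toddInv_right h2, h1]
  exact (hl.congr_of_eventuallyEq heq).contDiffWithinAt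

end ToddAux

/-- The function `μ` is smooth, has everywhere positive derivative, and is a
diffeomorphism from `ℝ` onto the open interval `(0,1)`. -/
theorem toddMu_diffeomorphism :
    ContDiff ℝ (⊤ : ℕ∞) toddMu ∧
    (∀ t : ℝ, 0 < deriv toddMu t) ∧
    Function.Injective toddMu ∧
    Set.range toddMu = Set.Ioo 0 1 ∧
    ∃ g : ℝ → ℝ, ContDiffOn ℝ (⊤ : ℕ∞) g (Set.Ioo 0 1) ∧
      (∀ t : ℝ, g (toddMu t) = t) ∧ (∀ x ∈ Set.Ioo (0:ℝ) 1, toddMu (g x) = x) := by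
  exact ⟨ToddAux.toddMu_contDiff, ToddAux.toddMu_deriv_pos,
    ToddAux.toddMu_strictMono.injective, ToddAux.toddMu_range,
    ToddAux.toddInv, ToddAux.toddInv_contDiffOn, ToddAux.toddInv_left,
    fun _ hx => ToddAux.toddInv_right hx⟩

end
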